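/- arXiv:2205.00721 — 2 statements merged into one kernel-verified Lean document; each statement's English description precedes it below -/
import Mathlib

section
/- For all t ∈ ℝ, u⃗ = (u₁,…,u_m) ∈ ℝ^m and s₁ < s₂ < … < s_m, the function 𝓗₁(t; u⃗, s⃗) := 1 + Σ_{ℓ=1}^m ((e^{u_ℓ} − 1)/2) · exp(Σ_{j=ℓ+1}^m u_j) · erfc(t − s_ℓ) is strictly positive. -/
open MeasureTheory Real Filter Finset

noncomputable def erfc (t : ℝ) : ℝ :=
  (2 / Real.sqrt Real.pi) * ∫ x in Set.Ioi t, Real.exp (-x ^ 2)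

noncomputable def H1 (m : ℕ) (u s : Fin m → ℝ) (t : ℝ) : ℝ :=
  1 + ∑ l : Fin m, ((Real.exp (u l) - 1) / 2) *
      Real.exp (∑ j ∈ Finset.univ.filter (fun j => l < j), u j) * erfc (t - s l)

lemma gauss_integrable : Integrable (fun x : ℝ => Real.exp (-x ^ 2)) := by
  have := integrable_exp_neg_mul_sq (b := 1) one_pos
  simpa using this

lemma gauss_setIntegral_pos (S : Set ℝ) (h : 0 < volume S) :
    0 < ∫ x in S, Real.exp (-x ^ 2) := by
  rw [setIntegral_pos_iff_support_of_nonneg_ae]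
  · simpa [Function.support, Real.exp_ne_zero] using h
  · filter_upwards with x using (Real.exp_pos _).le
  · exact gauss_integrable.integrableOn

lemma erfc_pos (t : ℝ) : 0 < erfc t := by
  apply mul_pos
  · positivity
  · exact gauss_setIntegral_pos _ (by simp)

lemma erfc_lt_two (t : ℝ) : erfc t < 2 := by
  have h1 : (∫ x in Set.Iic t, Real.exp (-x ^ 2)) + ∫ x in Set.Ioi t, Real.exp (-x ^ 2)
      = Real.sqrt Real.pi := by
    rw [intervalIntegral.integral_Iic_add_Ioi gauss_integrable.integrableOn
      gauss_integrable.integrableOn]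
    have := integral_gaussian 1
    simpa using this
  have h2 : 0 < ∫ x in Set.Iic t, Real.exp (-x ^ 2) :=
    gauss_setIntegral_pos _ (by simp)
  have hpi : 0 < Real.sqrt Real.pi := Real.sqrt_pos.2 Real.pi_pos
  have h3 : (∫ x in Set.Ioi t, Real.exp (-x ^ 2)) < Real.sqrt Real.pi := by linarith
  rw [erfc, div_mul_eq_mul_div, div_lt_iff₀ hpi]
  nlinarith

lemma erfc_anti {a b : ℝ} (hab : a ≤ b) : erfc b ≤ erfc a := by
  unfold erfc
  apply mul_le_mul_of_nonneg_left _ (by positivity)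
  apply setIntegral_mono_set gauss_integrable.integrableOn
  · filter_upwards with x using (Real.exp_pos _).le
  · exact HasSubset.Subset.eventuallyLE (Set.Ioi_subset_Ioi hab)

lemma abel_id (E c : ℕ → ℝ) (n : ℕ) :
    ∑ l ∈ range n, (E l - E (l+1)) * c l
      = E 0 * c 0 - E n * c n + ∑ l ∈ range n, E (l+1) * (c (l+1) - c l) := by
  have h := Finset.sum_range_sub' (fun l => E l * c l) n
  have h2 : ∀ l, (E l - E (l+1)) * c l
      = (E l * c l - E (l+1) * c (l+1)) + E (l+1) * (c (l+1) - c l) := fun l => by ring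
  simp_rw [h2, Finset.sum_add_distrib, h]


theorem H1_pos (m : ℕ) (hm : 0 < m) (t : ℝ) (u s : Fin m → ℝ) (hs : StrictMono s) :
    0 < H1 m u s t := by
  set u' : ℕ → ℝ := fun j => if h : j < m then u ⟨j, h⟩ else 0 with hu'
  set E : ℕ → ℝ := fun l => Real.exp (∑ j ∈ Finset.Ico l m, u' j) with hE
  have hmin : ∀ l : ℕ, min l (m - 1) < m := fun l => by omega
  set c : ℕ → ℝ := fun l => erfc (t - s ⟨min l (m - 1), hmin l⟩) / 2 with hc
  -- basic facts
  have hEpos : ∀ l, 0 < E l := fun l => Real.exp_pos _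
  have hEm : E m = 1 := by simp [hE]
  have hcpos : ∀ l, 0 < c l := fun l => by
    have := erfc_pos (t - s ⟨min l (m - 1), hmin l⟩); simp only [hc]; linarith
  have hclt : ∀ l, c l < 1 := fun l => by
    have := erfc_lt_two (t - s ⟨min l (m - 1), hmin l⟩); simp only [hc]; linarith
  have hcmono : ∀ l, c l ≤ c (l + 1) := by
    intro l
    have h1 : (⟨min l (m - 1), hmin l⟩ : Fin m) ≤ ⟨min (l + 1) (m - 1), hmin (l + 1)⟩ :=
      Fin.mk_le_mk.2 (by omega)
    have h2 := hs.monotone h1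
    have := erfc_anti (a := t - s ⟨min (l + 1) (m - 1), hmin (l + 1)⟩)
      (b := t - s ⟨min l (m - 1), hmin l⟩) (by linarith)
    simp only [hc]
    linarith
  -- rewrite the H1 sum
  have hsum : ∑ l : Fin m, ((Real.exp (u l) - 1) / 2) *
      Real.exp (∑ j ∈ Finset.univ.filter (fun j => l < j), u j) * erfc (t - s l)
      = ∑ l ∈ range m, (E l - E (l + 1)) * c l := by
    rw [← Fin.sum_univ_eq_sum_range (fun l => (E l - E (l + 1)) * c l) m]
    apply Finset.sum_congr rfl
    intro l _
    have hfil : ∑ j ∈ Finset.univ.filter (fun j => l < j), u j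
        = ∑ j ∈ Finset.Ico (l.val + 1) m, u' j := by
      rw [Finset.sum_filter]
      calc ∑ a : Fin m, (if l < a then u a else 0)
          = ∑ a : Fin m, (fun j : ℕ => if (l : ℕ) < j then u' j else 0) a.val := by
            apply Finset.sum_congr rfl
            intro a _
            have hua : u' a.val = u a := by
              simp only [hu']
              simp [a.isLt]
            simp only [Fin.lt_def, hua]
        _ = ∑ j ∈ range m, (if (l : ℕ) < j then u' j else 0) :=
            Fin.sum_univ_eq_sum_range (fun j : ℕ => if (l : ℕ) < j then u' j else 0) m
        _ = ∑ j ∈ Finset.Ico (l.val + 1) m, u' j := by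
            rw [← Finset.sum_filter]
            congr 1
            ext x
            simp only [Finset.mem_filter, Finset.mem_range, Finset.mem_Ico]
            omega
    have hsplit : ∑ j ∈ Finset.Ico l.val m, u' j
        = u' l.val + ∑ j ∈ Finset.Ico (l.val + 1) m, u' j := by
      rw [← Finset.sum_Ico_consecutive u' (Nat.le_succ l.val) l.isLt,
        Nat.Ico_succ_singleton, Finset.sum_singleton]
    have hul : u' l.val = u l := by simp [hu', l.isLt]
    have hcl : c l.val = erfc (t - s l) / 2 := by
      have : (⟨min l.val (m - 1), hmin l.val⟩ : Fin m) = l := by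
        apply Fin.ext
        have := l.isLt
        simp only []
        omega
      simp only [hc, this]
    have hEl : E l.val = Real.exp (u l) * E (l.val + 1) := by
      simp only [hE, hsplit, hul, Real.exp_add]
    rw [hfil, hcl, hEl]
    simp only [hE]
    ring
  have hnn : 0 ≤ ∑ l ∈ range m, E (l + 1) * (c (l + 1) - c l) :=
    Finset.sum_nonneg fun l _ => mul_nonneg (hEpos _).le (by linarith [hcmono l])
  have h0 : 0 < E 0 * c 0 := mul_pos (hEpos 0) (hcpos 0)
  have hcm := hclt m
  rw [H1, hsum, abel_id, hEm]
  linarith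
end

section
/- For all t ∈ ℝ, u⃗ ∈ ℝ^m and s⃗ ∈ ℝ^m, one has the identity 𝓗₁(t; u⃗, s⃗) = e^{u₁ + ⋯ + u_m} · 𝓗₂(−t; u⃗, s⃗), where 𝓗₁(t; u⃗, s⃗) = 1 + Σ_{ℓ=1}^m ((e^{u_ℓ} − 1)/2) exp(Σ_{j=ℓ+1}^m u_j) erfc(t − s_ℓ) and 𝓗₂(t; u⃗, s⃗) = 1 + Σ_{ℓ=1}^m ((e^{−u_ℓ} − 1)/2) exp(−Σ_{j=1}^{ℓ−1} u_j) erfc(t + s_ℓ). -/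
open MeasureTheory Real Filter Finset

lemma erfc_neg (x : ℝ) : erfc (-x) = 2 - erfc x := by
  have hint : Integrable (fun t : ℝ => Real.exp (-t^2)) := by
    simpa using integrable_exp_neg_mul_sq (by norm_num : (0:ℝ) < 1)
  have h1 : (∫ t in Set.Ioi (-x), Real.exp (-t^2)) = ∫ t in Set.Iic x, Real.exp (-t^2) := by
    have := integral_comp_neg_Ioi (-x) (fun t : ℝ => Real.exp (-t^2))
    simpa using this
  have key : (∫ t in Set.Ioi (-x), Real.exp (-t^2)) + (∫ t in Set.Ioi x, Real.exp (-t^2))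
      = Real.sqrt Real.pi := by
    rw [h1, intervalIntegral.integral_Iic_add_Ioi (hint.integrableOn) (hint.integrableOn)]
    simpa using integral_gaussian 1
  have hs : Real.sqrt Real.pi ≠ 0 := by positivity
  unfold erfc
  field_simp
  linarith [key]

noncomputable def H2 (m : ℕ) (u s : Fin m → ℝ) (t : ℝ) : ℝ :=
  1 + ∑ l : Fin m, ((Real.exp (-u l) - 1) / 2) *
      Real.exp (-∑ j ∈ Finset.univ.filter (fun j => j < l), u j) * erfc (t + s l)

lemma filter_gt_zero_sum (m : ℕ) (u : Fin (m+1) → ℝ) :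
    ∑ j ∈ Finset.univ.filter (fun j => (0:Fin (m+1)) < j), u j = ∑ j : Fin m, u j.succ := by
  rw [Finset.sum_filter, Fin.sum_univ_succ]; simp [Fin.succ_pos]

lemma filter_gt_succ_sum (m : ℕ) (u : Fin (m+1) → ℝ) (l : Fin m) :
    ∑ j ∈ Finset.univ.filter (fun j => l.succ < j), u j
      = ∑ j ∈ Finset.univ.filter (fun j => l < j), u j.succ := by
  rw [Finset.sum_filter, Finset.sum_filter, Fin.sum_univ_succ]; simp [Fin.succ_lt_succ_iff]

lemma filter_lt_succ_sum (m : ℕ) (u : Fin (m+1) → ℝ) (l : Fin m) :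
    ∑ j ∈ Finset.univ.filter (fun j => j < l.succ), u j
      = u 0 + ∑ j ∈ Finset.univ.filter (fun j => j < l), u j.succ := by
  rw [Finset.sum_filter, Finset.sum_filter, Fin.sum_univ_succ]
  simp [Fin.succ_lt_succ_iff, Fin.succ_pos]

theorem H1_eq_exp_mul_H2 (m : ℕ) (t : ℝ) (u s : Fin m → ℝ) :
    H1 m u s t = Real.exp (∑ j, u j) * H2 m u s (-t) := by
  induction m generalizing t with
  | zero => simp [H1, H2]
  | succ n ih =>
    have ih' := ih t (fun j => u j.succ) (fun j => s j.succ)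
    unfold H1 H2 at ih' ⊢
    beta_reduce at ih'
    simp only [Fin.sum_univ_succ, filter_gt_zero_sum, filter_gt_succ_sum, filter_lt_succ_sum,
      neg_add, Real.exp_add]
    have h0 : Finset.filter (fun j : Fin (n+1) => j < 0) Finset.univ = ∅ := by simp
    rw [h0]
    simp only [Finset.sum_empty, neg_zero, Real.exp_zero, mul_one]
    have hc : erfc (-t + s 0) = 2 - erfc (t - s 0) := by
      rw [show -t + s 0 = -(t - s 0) by ring, erfc_neg]
    rw [hc]
    have hfac : ∑ x : Fin n, (rexp (-u x.succ) - 1) / 2 *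
        (rexp (-u 0) * rexp (-∑ j ∈ Finset.filter (fun j => j < x) Finset.univ, u j.succ)) *
        erfc (-t + s x.succ)
      = rexp (-u 0) * ∑ x : Fin n, (rexp (-u x.succ) - 1) / 2 *
        rexp (-∑ j ∈ Finset.filter (fun j => j < x) Finset.univ, u j.succ) * erfc (-t + s x.succ) := by
      rw [Finset.mul_sum]; exact Finset.sum_congr rfl fun x _ => by ring
    rw [hfac]
    set T := Real.exp (∑ j : Fin n, u j.succ) with hT
    set b := erfc (t - s 0) with hb
    set S2 := ∑ x : Fin n, (rexp (-u x.succ) - 1) / 2 *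
        rexp (-∑ j ∈ Finset.filter (fun j => j < x) Finset.univ, u j.succ) * erfc (-t + s x.succ) with hS2
    have hA : Real.exp (u 0) * Real.exp (-u 0) = 1 := by
      rw [← Real.exp_add]; simp
    linear_combination ih' - (T + T*S2 - T*b/2) * hA
end
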